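/- For all integers $n > r \geq 1$ and all $p$ with $\frac{2(n-r+2)}{n-r} < p < \infty$, the symmetric-space exponent $r\,\delta(n/r, p)$ is strictly less than the general exponent $\delta(n,p,r)$ whenever $r \geq 2$ and $n/r > 1$; at $p = \infty$ they agree, both equaling $\frac{n-r}{2}$, and for $2 \leq p \leq \frac{2(n-r+2)}{n-r}$ one has $r\,\delta(n/r,p) \leq \delta(n,p,r)$. -/
import Mathlib


open Set

/-- Sogge's exponent `δ(m,p)` in (possibly non-integer) dimension `m`, as a function of
`s = 1/p`. -/
noncomputable def soggeExp (m s : ℝ) : ℝ :=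
  if s ≤ (m - 1) / (2 * (m + 1)) then (m - 1) / 2 - m * s
  else (m - 1) / 4 - (m - 1) / 2 * s

/-- The joint quasimode exponent `δ(n,p,r)` of Theorem 1, as a function of `s = 1/p`. -/
noncomputable def jointExp (n r s : ℝ) : ℝ :=
  if s ≤ (n - r) / (2 * (n - r + 2)) then (n - r) / 2 - (n - r + 1) * s
  else (n - r) / 4 - (n - r) / 2 * s

/-- Comparison with the symmetric-space exponent `r δ(n/r, p)`: strict inequality in the
range `2(n-r+2)/(n-r) < p < ∞` (when `r ≥ 2`, `n/r > 1`), equality `(n-r)/2` at `p = ∞`,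
and `≤` in the range `2 ≤ p ≤ 2(n-r+2)/(n-r)`. -/
theorem stmt_12 (n r : ℕ) (hr : 1 ≤ r) (hn : r < n) :
    (∀ s : ℝ, 0 < s → s < ((n : ℝ) - r) / (2 * ((n : ℝ) - r + 2)) →
      2 ≤ r → 1 < (n : ℝ) / r →
      (r : ℝ) * soggeExp ((n : ℝ) / r) s < jointExp n r s) ∧
    ((r : ℝ) * soggeExp ((n : ℝ) / r) 0 = ((n : ℝ) - r) / 2 ∧
      jointExp n r 0 = ((n : ℝ) - r) / 2) ∧
    (∀ s : ℝ, ((n : ℝ) - r) / (2 * ((n : ℝ) - r + 2)) ≤ s → s ≤ 1 / 2 →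
      (r : ℝ) * soggeExp ((n : ℝ) / r) s ≤ jointExp n r s) := by

  have hrR : (1:ℝ) ≤ (r:ℝ) := by exact_mod_cast hr
  have hr0 : (0:ℝ) < (r:ℝ) := lt_of_lt_of_le one_pos hrR
  have hnR : (r:ℝ) < (n:ℝ) := by exact_mod_cast hn
  have hN1 : (1:ℝ) ≤ (n:ℝ) - r := by
    have : (r:ℝ) + 1 ≤ n := by exact_mod_cast hn
    linarith
  have hnr0 : (0:ℝ) < 2 * ((n:ℝ) + r) := by linarith
  have hNd0 : (0:ℝ) < 2 * ((n:ℝ) - r + 2) := by linarith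
  have hm : (((n:ℝ)/r - 1)) / (2 * ((n:ℝ)/r + 1)) = ((n:ℝ) - r) / (2 * ((n:ℝ) + r)) := by
    rw [div_eq_div_iff (by positivity) hnr0.ne']
    field_simp
  have he1 : (r:ℝ) * (((n:ℝ)/r - 1)/2 - ((n:ℝ)/r) * 0) = ((n:ℝ) - r)/2 := by
    field_simp
    ring
  have hg1 : ∀ s : ℝ, (r:ℝ) * (((n:ℝ)/r - 1)/2 - ((n:ℝ)/r) * s) = ((n:ℝ) - r)/2 - n * s := by
    intro s; field_simp
  have hg2 : ∀ s : ℝ, (r:ℝ) * (((n:ℝ)/r - 1)/4 - ((n:ℝ)/r - 1)/2 * s)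
      = ((n:ℝ) - r)/4 - ((n:ℝ) - r)/2 * s := by
    intro s; field_simp
  refine ⟨?_, ⟨?_, ?_⟩, ?_⟩
  · intro s hs hsJ hr2 _
    have hr2R : (2:ℝ) ≤ (r:ℝ) := by exact_mod_cast hr2
    have hsJ' : s * (2 * ((n:ℝ) - r + 2)) < (n:ℝ) - r := by
      rwa [← lt_div_iff₀ hNd0]
    rw [soggeExp, jointExp]
    have hjif : s ≤ ((n:ℝ) - r) / (2 * ((n:ℝ) - r + 2)) := le_of_lt hsJ
    rw [if_pos hjif]
    split_ifs with h1
    · rw [hg1]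
      nlinarith
    · rw [hg2]
      nlinarith
  · rw [soggeExp, if_pos]
    · exact he1
    · rw [hm]
      positivity
  · rw [jointExp, if_pos (by positivity)]
    ring
  · intro s hsJ hs2
    have hsJ' : ((n:ℝ) - r) ≤ s * (2 * ((n:ℝ) - r + 2)) := by
      rwa [← div_le_iff₀ hNd0]
    rw [soggeExp, jointExp]
    split_ifs with h1 h2
    · rw [hg1, hm] at *
      have h1' : s * (2 * ((n:ℝ) + r)) ≤ (n:ℝ) - r := by
        rwa [← le_div_iff₀ hnr0]
      nlinarith
    · rw [hg1, hm] at *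
      have h1' : s * (2 * ((n:ℝ) + r)) ≤ (n:ℝ) - r := by
        rwa [← le_div_iff₀ hnr0]
      have h2' : ((n:ℝ) - r) < s * (2 * ((n:ℝ) - r + 2)) := by
        exact (div_lt_iff₀ hNd0).mp (lt_of_not_ge h2)
      nlinarith
    · rw [hg2]
      have h2' : s * (2 * ((n:ℝ) - r + 2)) ≤ (n:ℝ) - r := by
        rwa [← le_div_iff₀ hNd0]
      nlinarith
    · rw [hg2]
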